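/- Under the bootstrap null (i.i.d. labels, P(a)=p_a, P(b)=p_b=1−p_a), the covariance of R_{C₀} and n_a^B equals (N − K + |C₀|) · 2 p_a p_b (1 − 2 p_a). In particular the covariance vanishes when p_a = 1/2. -/

import Mathlib

open scoped Classical
open Finset

/-- Number of group-`a` subjects in category `k` under labeling `g`. -/
def aCnt {N K : ℕ} (c : Fin N → Fin K) (g : Fin N → Bool) (k : Fin K) : ℕ :=
  (univ.filter fun x => c x = k ∧ g x = true).card

/-- Number of group-`b` subjects in category `k` under labeling `g`. -/
def bCnt {N K : ℕ} (c : Fin N → Fin K) (g : Fin N → Bool) (k : Fin K) : ℕ :=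
  (univ.filter fun x => c x = k ∧ g x = false).card

/-- The statistic `R_{C₀}` (real-valued version; edge sum written as half the dart sum). -/
noncomputable def RC0 {N K : ℕ} (c : Fin N → Fin K) (C0 : SimpleGraph (Fin K))
    (m : Fin K → ℕ) (g : Fin N → Bool) : ℝ :=
  (∑ k, 2 * (aCnt c g k : ℝ) * (bCnt c g k : ℝ) / (m k : ℝ)) +
    (∑ dd : C0.Dart,
        ((aCnt c g dd.toProd.1 : ℝ) * (bCnt c g dd.toProd.2 : ℝ) +
          (aCnt c g dd.toProd.2 : ℝ) * (bCnt c g dd.toProd.1 : ℝ)) /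
          ((m dd.toProd.1 : ℝ) * (m dd.toProd.2 : ℝ))) / 2

/-- Expectation under the bootstrap null: each subject independently gets label `a`
with probability `p`, else `b`. -/
noncomputable def bootE {N : ℕ} (p : ℝ) (f : (Fin N → Bool) → ℝ) : ℝ :=
  ∑ g : Fin N → Bool, (∏ x, if g x = true then p else 1 - p) * f g

/-!
With `a_k`, `b_k` the label counts in category `k`, both `2 a_k b_k` and `a_u b_v + a_v b_u`
are sums of the disagreement indicators `1{g_i ≠ g_j}` over pairs of subjects `(i, j)` in the categories involved, so by bilinearity the
covariance is a weighted count of pairs. For `i ≠ j` the indicator `1{g_i ≠ g_j}` is independent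
of `g_x` for every `x ∉ {i, j}`, and its covariance with each of `1{g_i = a}`, `1{g_j = a}` is
`p_a p_b (1 - 2 p_a)`; so every pair of distinct subjects contributes `2 p_a p_b (1 - 2 p_a)`.
Category `k` has `m_k (m_k - 1)` such pairs of weight `1 / m_k`, and each of the `2 |C₀|` darts
`(u, v)` has `m_u m_v` pairs of weight `1 / (2 m_u m_v)`, for a total weight
`Σ_k (m_k - 1) + |C₀| = N - K + |C₀|`.
-/

section Bootstrap

variable {N : ℕ} (p : ℝ)

theorem bootE_add (f h : (Fin N → Bool) → ℝ) :
    bootE p (fun g => f g + h g) = bootE p f + bootE p h := by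
  simp only [bootE, mul_add, sum_add_distrib]

theorem bootE_const_mul (r : ℝ) (f : (Fin N → Bool) → ℝ) :
    bootE p (fun g => r * f g) = r * bootE p f := by
  simp only [bootE, mul_sum, mul_left_comm]

theorem bootE_sub (f h : (Fin N → Bool) → ℝ) :
    bootE p (fun g => f g - h g) = bootE p f - bootE p h := by
  simp only [bootE, mul_sub, sum_sub_distrib]

theorem bootE_sum {ι : Type*} (s : Finset ι) (f : ι → (Fin N → Bool) → ℝ) :
    bootE p (fun g => ∑ i ∈ s, f i g) = ∑ i ∈ s, bootE p (f i) := by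
  simp only [bootE, mul_sum]
  exact sum_comm

theorem bootE_div_const (f : (Fin N → Bool) → ℝ) (r : ℝ) :
    bootE p (fun g => f g / r) = bootE p f / r := by
  simp only [div_eq_inv_mul, bootE_const_mul]

theorem bootE_prod (F : Fin N → Bool → ℝ) :
    bootE p (fun g => ∏ x, F x (g x)) = ∏ x, ((1 - p) * F x false + p * F x true) := by
  simp only [bootE, ← prod_mul_distrib]
  rw [← Fintype.prod_sum fun x (b : Bool) => (if b then p else 1 - p) * F x b]
  simp [add_comm]

def indA (x : Fin N) (g : Fin N → Bool) : ℝ := if g x then 1 else 0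

def disagree (i j : Fin N) (g : Fin N → Bool) : ℝ := if g i = g j then 0 else 1

theorem bootE_prod_indA (S : Finset (Fin N)) :
    bootE p (fun g => ∏ x ∈ S, indA x g) = p ^ #S := by
  have hS : (fun g => ∏ x ∈ S, indA x g) =
      fun g => ∏ x, if x ∈ S then (if g x then (1 : ℝ) else 0) else 1 := by
    ext g
    rw [prod_ite_mem, univ_inter]
    rfl
  have hpow : p ^ #S = ∏ x, if x ∈ S then p else 1 := by
    rw [prod_ite_mem, univ_inter, prod_const]
  rw [hS, bootE_prod p fun x b => if x ∈ S then (if b then (1 : ℝ) else 0) else 1, hpow]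
  exact prod_congr rfl fun x _ => by by_cases hx : x ∈ S <;> simp [hx]

theorem bootE_indA (i : Fin N) : bootE p (indA i) = p := by
  simpa using bootE_prod_indA p {i}

theorem bootE_indA_mul_indA {i j : Fin N} (hij : i ≠ j) :
    bootE p (fun g => indA i g * indA j g) = p ^ 2 := by
  simpa [prod_pair hij, card_pair hij] using bootE_prod_indA p {i, j}

theorem bootE_indA_mul_indA_mul_indA {i j x : Fin N} (hij : i ≠ j) (hxi : x ≠ i)
    (hxj : x ≠ j) :
    bootE p (fun g => indA i g * indA j g * indA x g) = p ^ 3 := by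
  have hx : x ∉ ({i, j} : Finset (Fin N)) := by simp [hxi, hxj]
  simpa [prod_insert hx, prod_pair hij, card_insert_of_notMem hx, card_pair hij, mul_comm]
    using bootE_prod_indA p {x, i, j}

theorem disagree_comm (i j : Fin N) : disagree i j = disagree (N := N) j i := by
  ext g
  simp only [disagree, eq_comm]

theorem disagree_eq (i j : Fin N) (g : Fin N → Bool) :
    disagree i j g = indA i g + indA j g - 2 * (indA i g * indA j g) := by
  cases hi : g i <;> cases hj : g j <;> norm_num [disagree, indA, hi, hj]

theorem bootE_disagree {i j : Fin N} (hij : i ≠ j) :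
    bootE p (disagree i j) = 2 * p * (1 - p) := by
  rw [funext (disagree_eq i j), bootE_sub, bootE_add, bootE_const_mul, bootE_indA, bootE_indA,
    bootE_indA_mul_indA p hij]
  ring

noncomputable def bootCov (f h : (Fin N → Bool) → ℝ) : ℝ :=
  bootE p (fun g => f g * h g) - bootE p f * bootE p h

theorem bootCov_add_left (f₁ f₂ h : (Fin N → Bool) → ℝ) :
    bootCov p (fun g => f₁ g + f₂ g) h = bootCov p f₁ h + bootCov p f₂ h := by
  simp only [bootCov, add_mul, bootE_add]
  ring

theorem bootCov_div_const_left (f h : (Fin N → Bool) → ℝ) (r : ℝ) :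
    bootCov p (fun g => f g / r) h = bootCov p f h / r := by
  simp only [bootCov, div_mul_eq_mul_div, bootE_div_const]
  ring

theorem bootCov_sum_left {ι : Type*} (s : Finset ι) (f : ι → (Fin N → Bool) → ℝ)
    (h : (Fin N → Bool) → ℝ) :
    bootCov p (fun g => ∑ i ∈ s, f i g) h = ∑ i ∈ s, bootCov p (f i) h := by
  simp only [bootCov, sum_mul, bootE_sum, sum_sub_distrib]

theorem bootCov_sum_right {ι : Type*} (s : Finset ι) (f : (Fin N → Bool) → ℝ)
    (h : ι → (Fin N → Bool) → ℝ) :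
    bootCov p f (fun g => ∑ i ∈ s, h i g) = ∑ i ∈ s, bootCov p f (h i) := by
  simp only [bootCov, mul_sum, bootE_sum, sum_sub_distrib]

theorem bootCov_disagree_indA_left {i j : Fin N} (hij : i ≠ j) :
    bootCov p (disagree i j) (indA i) = p * (1 - p) * (1 - 2 * p) := by
  have hmul : ∀ g, disagree i j g * indA i g = indA i g - indA i g * indA j g := fun g => by
    cases hi : g i <;> cases hj : g j <;> simp [disagree, indA, hi, hj]
  rw [bootCov, funext hmul, bootE_sub, bootE_indA, bootE_indA_mul_indA p hij,
    bootE_disagree p hij]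
  ring

theorem bootCov_disagree_indA_of_ne {i j x : Fin N} (hij : i ≠ j) (hxi : x ≠ i)
    (hxj : x ≠ j) :
    bootCov p (disagree i j) (indA x) = 0 := by
  have hmul : ∀ g, disagree i j g * indA x g =
      indA i g * indA x g + indA j g * indA x g - 2 * (indA i g * indA j g * indA x g) :=
    fun g => by rw [disagree_eq]; ring
  rw [bootCov, funext hmul, bootE_sub, bootE_add, bootE_const_mul,
    bootE_indA_mul_indA p hxi.symm, bootE_indA_mul_indA p hxj.symm,
    bootE_indA_mul_indA_mul_indA p hij hxi hxj, bootE_disagree p hij, bootE_indA]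
  ring

theorem bootCov_disagree_count (i j : Fin N) :
    bootCov p (disagree i j) (fun g => ∑ x, indA x g) =
      if i = j then 0 else 2 * p * (1 - p) * (1 - 2 * p) := by
  split_ifs with hij
  · subst hij
    simp [bootCov, bootE, disagree]
  rw [bootCov_sum_right, ← sum_subset (subset_univ {i, j}) fun x _ hx =>
      bootCov_disagree_indA_of_ne p hij (by simp_all) (by simp_all),
    sum_pair hij, bootCov_disagree_indA_left p hij, disagree_comm,
    bootCov_disagree_indA_left p (Ne.symm hij)]
  ring

theorem natCast_card_filter_true (S : Finset (Fin N)) (g : Fin N → Bool) :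
    (#(S.filter fun x => g x = true) : ℝ) = ∑ x ∈ S, indA x g := by
  rw [natCast_card_filter]
  rfl

theorem natCast_card_filter_false (S : Finset (Fin N)) (g : Fin N → Bool) :
    (#(S.filter fun x => g x = false) : ℝ) = ∑ x ∈ S, (1 - indA x g) := by
  rw [natCast_card_filter]
  exact sum_congr rfl fun x _ => by cases h : g x <;> simp [indA, h]

theorem sum_sum_disagree (S T : Finset (Fin N)) (g : Fin N → Bool) :
    ∑ i ∈ S, ∑ j ∈ T, disagree i j g =
      #(S.filter fun x => g x = true) * #(T.filter fun x => g x = false) +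
        #(T.filter fun x => g x = true) * (#(S.filter fun x => g x = false) : ℝ) := by
  have hsplit : ∀ i j, disagree i j g = indA i g * (1 - indA j g) + indA j g * (1 - indA i g) :=
    fun i j => by rw [disagree_eq]; ring
  simp only [natCast_card_filter_true, natCast_card_filter_false, sum_mul_sum, hsplit,
    sum_add_distrib]
  rw [sum_comm (s := T)]

theorem sum_sum_ite_eq_zero (S T : Finset (Fin N)) (r : ℝ) :
    ∑ i ∈ S, ∑ j ∈ T, (if i = j then 0 else r) = (#S * #T - #(S ∩ T)) * r := by
  have hsub : ∀ i j : Fin N, (if i = j then 0 else r) = r - if i = j then r else 0 :=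
    fun i j => by split_ifs <;> ring
  simp only [hsub, sum_sub_distrib, sum_ite_eq, sum_ite_mem, sum_const, nsmul_eq_mul]
  ring

theorem bootCov_sum_sum_disagree_count (S T : Finset (Fin N)) :
    bootCov p (fun g => ∑ i ∈ S, ∑ j ∈ T, disagree i j g) (fun g => ∑ x, indA x g) =
      (#S * #T - #(S ∩ T)) * (2 * p * (1 - p) * (1 - 2 * p)) := by
  simp only [bootCov_sum_left, bootCov_disagree_count, sum_sum_ite_eq_zero]

end Bootstrap

section Statistic

variable {N K : ℕ} (c : Fin N → Fin K)

def fiber (k : Fin K) : Finset (Fin N) := univ.filter fun x => c x = k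

theorem fiber_inter_fiber_of_ne {u v : Fin K} (huv : u ≠ v) : fiber c u ∩ fiber c v = ∅ :=
  disjoint_iff_inter_eq_empty.1 (disjoint_filter.2 fun _ _ hu hv => huv (hu ▸ hv))

theorem sum_card_fiber : ∑ k, #(fiber c k) = N := by
  unfold fiber
  rw [← card_eq_sum_card_fiberwise fun x _ => mem_univ (c x), card_fin]

variable (g : Fin N → Bool)

theorem aCnt_eq_card_filter (k : Fin K) :
    aCnt c g k = #((fiber c k).filter fun x => g x = true) := by
  rw [fiber, filter_filter]
  rfl

theorem bCnt_eq_card_filter (k : Fin K) :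
    bCnt c g k = #((fiber c k).filter fun x => g x = false) := by
  rw [fiber, filter_filter]
  rfl

theorem aCnt_mul_bCnt_add (u v : Fin K) :
    (aCnt c g u : ℝ) * bCnt c g v + aCnt c g v * bCnt c g u =
      ∑ i ∈ fiber c u, ∑ j ∈ fiber c v, disagree i j g := by
  rw [sum_sum_disagree, aCnt_eq_card_filter, aCnt_eq_card_filter, bCnt_eq_card_filter,
    bCnt_eq_card_filter]

theorem RC0_eq_sum_disagree (C0 : SimpleGraph (Fin K)) (m : Fin K → ℕ) :
    RC0 c C0 m g =
      ∑ k, (∑ i ∈ fiber c k, ∑ j ∈ fiber c k, disagree i j g) / m k +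
        (∑ d : C0.Dart,
          (∑ i ∈ fiber c d.toProd.1, ∑ j ∈ fiber c d.toProd.2, disagree i j g) /
            (m d.toProd.1 * m d.toProd.2)) / 2 := by
  simp only [RC0, ← aCnt_mul_bCnt_add]
  congr 1
  exact sum_congr rfl fun k _ => by ring

end Statistic

theorem bootstrap_cov_RC0_naB_general (K N : ℕ) (p : ℝ)
    (c : Fin N → Fin K) (C0 : SimpleGraph (Fin K)) (m : Fin K → ℕ)
    (hm : ∀ k, m k = (univ.filter fun x => c x = k).card) (hmk : ∀ k, 0 < m k) :
    bootE p (fun g => RC0 c C0 m g * ((univ.filter fun x => g x = true).card : ℝ)) -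
        bootE p (fun g => RC0 c C0 m g) *
          bootE (N := N) p (fun g => ((univ.filter fun x => g x = true).card : ℝ)) =
      ((N : ℝ) - (K : ℝ) + (C0.edgeFinset.card : ℝ)) * (2 * p * (1 - p) * (1 - 2 * p)) := by
  have hfiber : ∀ k, #(fiber c k) = m k := fun k => (hm k).symm
  have hm0 : ∀ k, (m k : ℝ) ≠ 0 := fun k => by exact_mod_cast (hmk k).ne'
  have hwithin : ∀ k, bootCov p
      (fun g => (∑ i ∈ fiber c k, ∑ j ∈ fiber c k, disagree i j g) / m k)
      (fun g => ∑ x, indA x g) = (m k - 1) * (2 * p * (1 - p) * (1 - 2 * p)) := fun k => by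
    rw [bootCov_div_const_left, bootCov_sum_sum_disagree_count, inter_self, hfiber]
    field_simp [hm0 k]
  have hdart : ∀ d : C0.Dart, bootCov p
      (fun g => (∑ i ∈ fiber c d.toProd.1, ∑ j ∈ fiber c d.toProd.2, disagree i j g) /
        (m d.toProd.1 * m d.toProd.2)) (fun g => ∑ x, indA x g) =
        2 * p * (1 - p) * (1 - 2 * p) := fun d => by
    rw [bootCov_div_const_left, bootCov_sum_sum_disagree_count,
      fiber_inter_fiber_of_ne c d.adj.ne, hfiber, hfiber, card_empty, Nat.cast_zero, sub_zero,
      mul_div_cancel_left₀ _ (mul_ne_zero (hm0 _) (hm0 _))]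
  have hN : ∑ k, (m k : ℝ) = N := by
    simp only [← hfiber]
    exact_mod_cast sum_card_fiber c
  change bootCov p (RC0 c C0 m) (fun g => _) = _
  simp only [natCast_card_filter_true]
  rw [funext (RC0_eq_sum_disagree c · C0 m), bootCov_add_left, bootCov_div_const_left,
    bootCov_sum_left, bootCov_sum_left, sum_congr rfl fun k _ => hwithin k,
    sum_congr rfl fun d _ => hdart d, ← sum_mul, sum_sub_distrib, hN, sum_const, sum_const,
    card_univ, card_univ, SimpleGraph.dart_card_eq_twice_card_edges]
  simp only [Fintype.card_fin, nsmul_eq_mul, Nat.cast_mul, Nat.cast_ofNat]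
  ring

/-- Under the bootstrap null with `P(a) = p_a`, the covariance of `R_{C₀}` and
`n_a^B = Σ_x 1{g_x = a}` equals `(N - K + |C₀|) · 2 p_a p_b (1 - 2 p_a)`. -/
theorem bootstrap_cov_RC0_naB (K N : ℕ) (p : ℝ) (hp0 : 0 ≤ p) (hp1 : p ≤ 1)
    (c : Fin N → Fin K) (C0 : SimpleGraph (Fin K)) (m : Fin K → ℕ)
    (hm : ∀ k, m k = (univ.filter fun x => c x = k).card) (hmk : ∀ k, 0 < m k) :
    bootE p (fun g => RC0 c C0 m g * ((univ.filter fun x => g x = true).card : ℝ)) -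
        bootE p (fun g => RC0 c C0 m g) *
          bootE (N := N) p (fun g => ((univ.filter fun x => g x = true).card : ℝ)) =
      ((N : ℝ) - (K : ℝ) + (C0.edgeFinset.card : ℝ)) * (2 * p * (1 - p) * (1 - 2 * p)) :=
  bootstrap_cov_RC0_naB_general K N p c C0 m hm hmk
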